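/- arXiv:1603.08109 — 2 statements merged into one kernel-verified Lean document; each statement's English description precedes it below -/
import Mathlib

section
/- For all N ∈ ℕ, σ > 0, T > 0, the uniform error satisfies sup{|E_{N,σ}(t,τ)| : -T ≤ t,τ ≤ T} ≤ Σ_{n=N}^{∞} e^{-λ} λⁿ/n!, where λ = T²/σ². -/
/-!
With `x = τt/σ²`, completing the square gives
`E = exp(-(t² + τ²)/(2σ²)) · (eˣ - ∑_{n<N} xⁿ/n!)`, and the Taylor remainder of `exp` at `x` is
bounded termwise by the remainder at `|x|`. By AM–GM `|x| ≤ (t² + τ²)/(2σ²)`, and `|x| ≤ λ`, so it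
remains that the Poisson tail `s ↦ e⁻ˢ ∑_{n≥N} sⁿ/n! = 1 - e⁻ˢ ∑_{n<N} sⁿ/n!` is increasing on
`s ≥ 0`: the derivative of `e⁻ˢ ∑_{n<N} sⁿ/n!` telescopes to `-e⁻ˢ s^(N-1)/(N-1)!`.
-/

open Finset Real
open scoped Nat

namespace Real

lemma hasSum_pow_add_div_factorial (N : ℕ) (s : ℝ) :
    HasSum (fun k ↦ s ^ (N + k) / (N + k)!) (exp s - ∑ n ∈ range N, s ^ n / n !) := by
  have h := (hasSum_nat_add_iff' N).mpr (NormedSpace.expSeries_div_hasSum_exp s)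
  simpa only [add_comm _ N, ← exp_eq_exp_ℝ] using h

lemma abs_exp_sub_sum_range_le (N : ℕ) (x : ℝ) :
    |exp x - ∑ n ∈ range N, x ^ n / n !| ≤ exp |x| - ∑ n ∈ range N, |x| ^ n / n ! := by
  rw [← (hasSum_pow_add_div_factorial N x).tsum_eq, ← (hasSum_pow_add_div_factorial N |x|).tsum_eq]
  refine (norm_tsum_le_tsum_norm (f := fun k ↦ x ^ (N + k) / (N + k)!) ?_).trans_eq ?_
  · simpa only [norm_div, norm_pow, Real.norm_eq_abs, Nat.abs_cast]
      using (hasSum_pow_add_div_factorial N |x|).summable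
  · simp only [norm_div, norm_pow, Real.norm_eq_abs, Nat.abs_cast]

lemma hasDerivAt_sum_range_succ_pow_div_factorial (M : ℕ) (s : ℝ) :
    HasDerivAt (fun x : ℝ ↦ ∑ n ∈ range (M + 1), x ^ n / n !) (∑ n ∈ range M, s ^ n / n !) s := by
  have h := HasDerivAt.fun_sum (u := range (M + 1)) (A := fun n x ↦ x ^ n / (n ! : ℝ))
    fun n _ ↦ (hasDerivAt_pow n s).div_const (n ! : ℝ)
  refine h.congr_deriv ?_
  rw [sum_range_succ', Nat.cast_zero, zero_mul, zero_div, add_zero]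
  refine sum_congr rfl fun n _ ↦ ?_
  rw [Nat.factorial_succ, Nat.add_sub_cancel, Nat.cast_mul]
  field_simp

lemma antitoneOn_exp_neg_mul_sum_range (N : ℕ) :
    AntitoneOn (fun s ↦ exp (-s) * ∑ n ∈ range N, s ^ n / n !) (Set.Ici 0) := by
  cases N with
  | zero => simp only [range_zero, sum_empty, mul_zero]; exact antitoneOn_const
  | succ M =>
    have hderiv : ∀ s : ℝ, HasDerivAt (fun x : ℝ ↦ exp (-x) * ∑ n ∈ range (M + 1), x ^ n / n !)
        (-(exp (-s) * s ^ M / M !)) s := fun s ↦ by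
      have h := (hasDerivAt_neg s).exp.fun_mul (hasDerivAt_sum_range_succ_pow_div_factorial M s)
      refine h.congr_deriv ?_
      rw [sum_range_succ]
      ring
    refine antitoneOn_of_deriv_nonpos (convex_Ici 0)
      (fun s _ ↦ (hderiv s).continuousAt.continuousWithinAt)
      (fun s _ ↦ (hderiv s).differentiableAt.differentiableWithinAt) fun s hs ↦ ?_
    rw [interior_Ici] at hs
    rw [(hderiv s).deriv, neg_nonpos]
    exact div_nonneg (mul_nonneg (exp_pos _).le (pow_nonneg (le_of_lt hs) M)) (by positivity)

lemma monotoneOn_exp_neg_mul_tsum_pow_add_div_factorial (N : ℕ) :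
    MonotoneOn (fun s ↦ exp (-s) * ∑' k, s ^ (N + k) / (N + k)!) (Set.Ici 0) := by
  intro a ha b hb hab
  have h := antitoneOn_exp_neg_mul_sum_range N ha hb hab
  simp only [(hasSum_pow_add_div_factorial N _).tsum_eq, mul_sub, ← exp_add, neg_add_cancel,
    exp_zero] at h ⊢
  linarith

lemma exp_neg_mul_abs_exp_sub_sum_range_le {N : ℕ} {x c s : ℝ} (hc : |x| ≤ c) (hs : |x| ≤ s) :
    exp (-c) * |exp x - ∑ n ∈ range N, x ^ n / n !| ≤
      exp (-s) * ∑' k, s ^ (N + k) / (N + k)! := by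
  calc exp (-c) * |exp x - ∑ n ∈ range N, x ^ n / n !|
      ≤ exp (-|x|) * (exp |x| - ∑ n ∈ range N, |x| ^ n / n !) :=
        mul_le_mul (exp_le_exp.mpr (neg_le_neg hc)) (abs_exp_sub_sum_range_le N x) (abs_nonneg _)
          (exp_pos _).le
    _ = exp (-|x|) * ∑' k, |x| ^ (N + k) / (N + k)! := by
        rw [(hasSum_pow_add_div_factorial N |x|).tsum_eq]
    _ ≤ exp (-s) * ∑' k, s ^ (N + k) / (N + k)! :=
        monotoneOn_exp_neg_mul_tsum_pow_add_div_factorial N (abs_nonneg x)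
          ((abs_nonneg x).trans hs) hs

end Real

theorem uniform_error_poisson_tail_bound_general (σ : ℝ) (N : ℕ) (T : ℝ)
    (t τ : ℝ) (ht : -T ≤ t) (ht' : t ≤ T) (hτ : -T ≤ τ) (hτ' : τ ≤ T) :
    |Real.exp (-(t - τ)^2 / (2 * σ^2)) -
        Real.exp (-(t^2 + τ^2) / (2 * σ^2)) *
          ∑ n ∈ Finset.range N, (1 / n.factorial : ℝ) * (τ * t / σ^2)^n| ≤
      ∑' n : ℕ, Real.exp (-(T^2 / σ^2)) * (T^2 / σ^2)^(N + n) / (N + n).factorial := by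
  have hgauss : exp (-(t - τ) ^ 2 / (2 * σ ^ 2)) =
      exp (-(t ^ 2 + τ ^ 2) / (2 * σ ^ 2)) * exp (τ * t / σ ^ 2) := by
    rw [← exp_add]
    ring_nf
  have hxc : |τ * t / σ ^ 2| ≤ (t ^ 2 + τ ^ 2) / (2 * σ ^ 2) := by
    rw [abs_div, abs_of_nonneg (sq_nonneg σ), mul_comm, ← div_div]
    gcongr
    rw [le_div_iff₀ two_pos, abs_mul]
    nlinarith [two_mul_le_add_sq |τ| |t|, sq_abs τ, sq_abs t]
  have hxT : |τ * t / σ ^ 2| ≤ T ^ 2 / σ ^ 2 := by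
    rw [abs_div, abs_of_nonneg (sq_nonneg σ)]
    gcongr
    rw [abs_le]
    constructor <;> nlinarith
  calc _ = exp (-((t ^ 2 + τ ^ 2) / (2 * σ ^ 2))) *
        |exp (τ * t / σ ^ 2) - ∑ n ∈ range N, (τ * t / σ ^ 2) ^ n / n !| := by
        simp only [hgauss, one_div_mul_eq_div]
        rw [← mul_sub, abs_mul, abs_of_pos (exp_pos _), neg_div]
    _ ≤ _ := exp_neg_mul_abs_exp_sub_sum_range_le hxc hxT
    _ = _ := by simp only [← tsum_mul_left, mul_div_assoc]

theorem uniform_error_poisson_tail_bound (σ : ℝ) (hσ : 0 < σ) (N : ℕ) (T : ℝ) (hT : 0 < T)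
    (t τ : ℝ) (ht : -T ≤ t) (ht' : t ≤ T) (hτ : -T ≤ τ) (hτ' : τ ≤ T) :
    |Real.exp (-(t - τ)^2 / (2 * σ^2)) -
        Real.exp (-(t^2 + τ^2) / (2 * σ^2)) *
          ∑ n ∈ Finset.range N, (1 / n.factorial : ℝ) * (τ * t / σ^2)^n| ≤
      ∑' n : ℕ, Real.exp (-(T^2 / σ^2)) * (T^2 / σ^2)^(N + n) / (N + n).factorial :=
  uniform_error_poisson_tail_bound_general σ N T t τ ht ht' hτ hτ'
end

section
/- Suppose the spatial weights satisfy w(j) ≥ 0, Σ_{j∈Ω} w(j) = 1, and w(0) > ε, where ε = sup|g - φ| over the relevant range. If the image f takes values in [-T,T], then the uniform difference between the exact bilateral filter (with kernel g) and the approximate bilateral filter (with kernel φ) is at most 2Tε/(w(0) - ε). -/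
theorem bilateral_filter_accuracy
    {I Ω : Type*} [Fintype I] [Fintype Ω]
    (j₀ : Ω) (sub : I → Ω → I) (hsub : ∀ i, sub i j₀ = i)
    (w : Ω → ℝ) (hw : ∀ j, 0 ≤ w j) (hw1 : ∑ j, w j = 1)
    (g φ : ℝ → ℝ → ℝ) (hgpos : ∀ t τ, 0 < g t τ) (hgdiag : ∀ τ, 1 ≤ g τ τ)
    (T ε : ℝ) (hT : 0 < T)
    (happrox : ∀ t τ, |t| ≤ T → |τ| ≤ T → |g t τ - φ t τ| ≤ ε)
    (hw0 : ε < w j₀)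
    (f : I → ℝ) (hf : ∀ i, |f i| ≤ T) (i : I) :
    |(∑ j, w j * g (f (sub i j)) (f i) * f (sub i j)) /
          (∑ j, w j * g (f (sub i j)) (f i)) -
        (∑ j, w j * φ (f (sub i j)) (f i) * f (sub i j)) /
          (∑ j, w j * φ (f (sub i j)) (f i))| ≤
      2 * T * ε / (w j₀ - ε) := by
  set a : Ω → ℝ := fun j => w j * g (f (sub i j)) (f i) with ha
  set b : Ω → ℝ := fun j => w j * φ (f (sub i j)) (f i) with hb
  set A : ℝ := ∑ j, a j with hA
  set B : ℝ := ∑ j, b j with hB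
  set Ng : ℝ := ∑ j, a j * f (sub i j) with hNg
  set Nφ : ℝ := ∑ j, b j * f (sub i j) with hNφ
  have hε0 : 0 ≤ ε := le_trans (abs_nonneg _) (happrox (f i) (f i) (hf i) (hf i))
  have hanonneg : ∀ j, 0 ≤ a j := fun j => mul_nonneg (hw j) (hgpos _ _).le
  have hAw : w j₀ ≤ A := by
    calc w j₀ = w j₀ * 1 := (mul_one _).symm
    _ ≤ a j₀ := by
        simp only [ha, hsub]
        exact mul_le_mul_of_nonneg_left (hgdiag _) (hw j₀)
    _ ≤ A := Finset.single_le_sum (fun j _ => hanonneg j) (Finset.mem_univ j₀)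
  have hAB : |A - B| ≤ ε := by
    rw [hA, hB, ← Finset.sum_sub_distrib]
    calc |∑ j, (a j - b j)| ≤ ∑ j, |a j - b j| := Finset.abs_sum_le_sum_abs _ _
    _ ≤ ∑ j, w j * ε := by
        refine Finset.sum_le_sum fun j _ => ?_
        simp only [ha, hb, ← mul_sub, abs_mul, abs_of_nonneg (hw j)]
        exact mul_le_mul_of_nonneg_left (happrox _ _ (hf _) (hf _)) (hw j)
    _ = ε := by rw [← Finset.sum_mul, hw1, one_mul]
  have hApos : 0 < A := lt_of_lt_of_le (lt_of_le_of_lt hε0 hw0) hAw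
  have hBlb : w j₀ - ε ≤ B := by
    have := abs_le.mp hAB
    linarith
  have hBpos : 0 < B := lt_of_lt_of_le (by linarith) hBlb
  have hNgA : |Ng| ≤ T * A := by
    calc |Ng| ≤ ∑ j, |a j * f (sub i j)| := Finset.abs_sum_le_sum_abs _ _
    _ ≤ ∑ j, a j * T := by
        refine Finset.sum_le_sum fun j _ => ?_
        rw [abs_mul, abs_of_nonneg (hanonneg j)]
        exact mul_le_mul_of_nonneg_left (hf _) (hanonneg j)
    _ = T * A := by rw [← Finset.sum_mul, mul_comm]
  have hNdiff : |Ng - Nφ| ≤ ε * T := by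
    rw [hNg, hNφ, ← Finset.sum_sub_distrib]
    calc |∑ j, (a j * f (sub i j) - b j * f (sub i j))|
        ≤ ∑ j, |a j * f (sub i j) - b j * f (sub i j)| := Finset.abs_sum_le_sum_abs _ _
    _ ≤ ∑ j, w j * ε * T := by
        refine Finset.sum_le_sum fun j _ => ?_
        rw [← sub_mul, abs_mul]
        have h1 : |a j - b j| ≤ w j * ε := by
          simp only [ha, hb, ← mul_sub, abs_mul, abs_of_nonneg (hw j)]
          exact mul_le_mul_of_nonneg_left (happrox _ _ (hf _) (hf _)) (hw j)
        exact mul_le_mul h1 (hf _) (abs_nonneg _) (mul_nonneg (hw j) hε0)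
    _ = ε * T := by rw [← Finset.sum_mul, ← Finset.sum_mul, hw1, one_mul]
  have key : Ng / A - Nφ / B = Ng * (B - A) / (A * B) + (Ng - Nφ) / B := by
    field_simp
    ring
  rw [key]
  have h1 : |Ng * (B - A) / (A * B)| ≤ T * ε / B := by
    rw [abs_div, abs_mul, abs_of_pos (mul_pos hApos hBpos)]
    rw [div_le_div_iff₀ (mul_pos hApos hBpos) hBpos]
    have h3 : |Ng| * |B - A| ≤ (T * A) * ε := by
      refine mul_le_mul hNgA ?_ (abs_nonneg _) (by positivity)
      rwa [abs_sub_comm]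
    nlinarith [hBpos.le]
  have h2 : |(Ng - Nφ) / B| ≤ T * ε / B := by
    rw [abs_div, abs_of_pos hBpos]
    gcongr
    linarith [hNdiff]
  calc |Ng * (B - A) / (A * B) + (Ng - Nφ) / B|
      ≤ |Ng * (B - A) / (A * B)| + |(Ng - Nφ) / B| := abs_add_le _ _
  _ ≤ T * ε / B + T * ε / B := add_le_add h1 h2
  _ = 2 * T * ε / B := by ring
  _ ≤ 2 * T * ε / (w j₀ - ε) := by
      apply div_le_div_of_nonneg_left (by positivity) (by linarith) hBlb
end
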